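/- arXiv:1701.09087 — 5 statements merged into one kernel-verified Lean document; each statement's English description precedes it below -/
import Mathlib

section
/- In the Cantor game on [a₀, b₀] with an uncountable target set S ⊆ [a₀, b₀], the limit set of any strategy for player A contains a generalized Cantor set. -/
open Filter Set

/-- Data generating a generalized Cantor set: closed intervals
`I_{i₁,…,iₙ} = [c l, d l]` indexed by nonempty finite binary sequences
(`l : List Bool`, with the last entry the most recently added index),
inside a closed interval `[lo, hi]`, with diameters controlled by a strictly
decreasing positive sequence `e` tending to `0`. -/
structure GenCantor where
  lo : ℝ
  hi : ℝ
  lo_lt_hi : lo < hi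
  e : ℕ → ℝ
  e_pos : ∀ n : ℕ, 0 < e n
  e_anti : StrictAnti e
  e_lim : Filter.Tendsto e Filter.atTop (nhds 0)
  c : List Bool → ℝ
  d : List Bool → ℝ
  diam_pos : ∀ l : List Bool, l ≠ [] → 0 < d l - c l
  diam_lt : ∀ l : List Bool, l ≠ [] → d l - c l < e l.length
  root_sub : ∀ i : Bool, Set.Icc (c [i]) (d [i]) ⊆ Set.Icc lo hi
  nested : ∀ l : List Bool, l ≠ [] → ∀ i : Bool,
    Set.Icc (c (l ++ [i])) (d (l ++ [i])) ⊆ Set.Icc (c l) (d l)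
  disj : ∀ l : List Bool,
    Set.Icc (c (l ++ [false])) (d (l ++ [false])) ∩
      Set.Icc (c (l ++ [true])) (d (l ++ [true])) = ∅

/-- The generalized Cantor set generated by the data `G`:
`C = ⋂_{n ≥ 1} ⋃_{i₁,…,iₙ} I_{i₁,…,iₙ}`. -/
def GenCantor.C (G : GenCantor) : Set ℝ :=
  ⋂ n : ℕ, ⋃ l ∈ {l : List Bool | l.length = n + 1}, Set.Icc (G.c l) (G.d l)

/-- A set of reals is a generalized Cantor set if it is generated by some data. -/
def IsGenCantorSet (C : Set ℝ) : Prop := ∃ G : GenCantor, G.C = C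

/-- The length-`(n+1)` initial segment `[s 0, …, s n]` of a binary sequence. -/
def prefixSeq (s : ℕ → Bool) (n : ℕ) : List Bool := List.ofFn fun i : Fin (n + 1) => s i

/-- A set `P ⊆ ℝ` is perfect if it is closed and each of its points is a
limit point of `P`. -/
def PerfectSet (P : Set ℝ) : Prop := IsClosed P ∧ ∀ x ∈ P, x ∈ closure (P \ {x})

/-- A valid history for player A before A's move number `n+1`:
moves `a 0 = a₀ < a 1 < ⋯ < a n < b n < ⋯ < b 1 < b 0 = b₀`. -/
def ValidHistA (a₀ b₀ : ℝ) {n : ℕ} (a b : Fin (n + 1) → ℝ) : Prop :=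
  a 0 = a₀ ∧ b 0 = b₀ ∧ StrictMono a ∧ StrictAnti b ∧ a (Fin.last n) < b (Fin.last n)

/-- A strategy for player A in the Cantor game on `[a₀, b₀]`:
functions `f n` producing the move `a (n+1)` from the history
`(a 0, b 0, …, a n, b n)`, with `a n < f n a b < b n` on valid histories. -/
structure StratA (a₀ b₀ : ℝ) where
  f : (n : ℕ) → (Fin (n + 1) → ℝ) → (Fin (n + 1) → ℝ) → ℝ
  valid : ∀ (n : ℕ) (a b : Fin (n + 1) → ℝ), ValidHistA a₀ b₀ a b →
    a (Fin.last n) < f n a b ∧ f n a b < b (Fin.last n)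

/-- A valid history for player B before B's move number `n+1`:
`a 0 = a₀ < a 1 < ⋯ < a (n+1) < b n < ⋯ < b 1 < b 0 = b₀`. -/
def ValidHistB (a₀ b₀ : ℝ) {n : ℕ} (a : Fin (n + 2) → ℝ) (b : Fin (n + 1) → ℝ) : Prop :=
  a 0 = a₀ ∧ b 0 = b₀ ∧ StrictMono a ∧ StrictAnti b ∧ a (Fin.last (n + 1)) < b (Fin.last n)

/-- A strategy for player B in the Cantor game on `[a₀, b₀]`:
functions `g n` producing the move `b (n+1)` from the history
`(a 0, b 0, …, a n, b n, a (n+1))`, with `a (n+1) < g n a b < b n` on valid histories. -/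
structure StratB (a₀ b₀ : ℝ) where
  g : (n : ℕ) → (Fin (n + 2) → ℝ) → (Fin (n + 1) → ℝ) → ℝ
  valid : ∀ (n : ℕ) (a : Fin (n + 2) → ℝ) (b : Fin (n + 1) → ℝ), ValidHistB a₀ b₀ a b →
    a (Fin.last (n + 1)) < g n a b ∧ g n a b < b (Fin.last n)

/-- A play of the Cantor game on `[a₀, b₀]`:
`a (n-1) < a n < b n < b (n-1)` for all `n ≥ 1`. -/
def IsPlay (a₀ b₀ : ℝ) (a b : ℕ → ℝ) : Prop :=
  a 0 = a₀ ∧ b 0 = b₀ ∧ ∀ n : ℕ, a n < a (n + 1) ∧ a (n + 1) < b (n + 1) ∧ b (n + 1) < b n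

/-- A play is consistent with a strategy for A if each of A's moves is given by
the strategy applied to the preceding history. -/
def ConsistentA {a₀ b₀ : ℝ} (σ : StratA a₀ b₀) (a b : ℕ → ℝ) : Prop :=
  ∀ n : ℕ, a (n + 1) = σ.f n (fun i : Fin (n + 1) => a i) (fun i : Fin (n + 1) => b i)

/-- A play is consistent with a strategy for B if each of B's moves is given by
the strategy applied to the preceding history. -/
def ConsistentB {a₀ b₀ : ℝ} (σ : StratB a₀ b₀) (a b : ℕ → ℝ) : Prop :=
  ∀ n : ℕ, b (n + 1) = σ.g n (fun i : Fin (n + 2) => a i) (fun i : Fin (n + 1) => b i)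

/-- The limit set of a strategy for player A: all limits `lim aₙ` over plays
consistent with the strategy. -/
def limitSetA {a₀ b₀ : ℝ} (σ : StratA a₀ b₀) : Set ℝ :=
  {x | ∃ a b : ℕ → ℝ, IsPlay a₀ b₀ a b ∧ ConsistentA σ a b ∧
    Filter.Tendsto a Filter.atTop (nhds x)}

/-- The limit set of a strategy for player B: all limits `lim aₙ` over plays
consistent with the strategy. -/
def limitSetB {a₀ b₀ : ℝ} (σ : StratB a₀ b₀) : Set ℝ :=
  {x | ∃ a b : ℕ → ℝ, IsPlay a₀ b₀ a b ∧ ConsistentB σ a b ∧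
    Filter.Tendsto a Filter.atTop (nhds x)}

/-- A strategy for A is winning for target set `S` iff its limit set lies in `S`. -/
def WinningA {a₀ b₀ : ℝ} (σ : StratA a₀ b₀) (S : Set ℝ) : Prop := limitSetA σ ⊆ S

/-- A strategy for B is winning for target set `S` iff its limit set lies in
`[a₀, b₀] − S`. -/
def WinningB {a₀ b₀ : ℝ} (σ : StratB a₀ b₀) (S : Set ℝ) : Prop :=
  limitSetB σ ⊆ Set.Icc a₀ b₀ \ S

/-- `B` is a Bernstein set in `X ⊆ ℝ` (with its subspace topology) if `B ⊆ X` and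
neither `B` nor `X − B` contains a set that is uncountable and closed in `X`. -/
def IsBernsteinIn (X B : Set ℝ) : Prop :=
  B ⊆ X ∧
    (¬ ∃ T : Set ℝ, T ⊆ B ∧ ¬ T.Countable ∧ IsClosed (Subtype.val ⁻¹' T : Set X)) ∧
    (¬ ∃ T : Set ℝ, T ⊆ X \ B ∧ ¬ T.Countable ∧ IsClosed (Subtype.val ⁻¹' T : Set X))

/-- The set of right condensation points of `S` in `[a₀, b₀]`. -/
def rightCondPts (a₀ b₀ : ℝ) (S : Set ℝ) : Set ℝ :=
  {x ∈ Set.Icc a₀ b₀ | ∀ ε > 0, ¬ (Set.Ioo x (x + ε) ∩ S).Countable}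

/-!
Player B can make A's strategy `σ` trace out a binary tree. When A has just moved to `α` and
B's last move is `b`, B either answers the midpoint `β` of `(α, b)`, to which `σ` replies with
some `α' < β`, or answers the midpoint of `(α, α')`. The intervals `[α, b]` at the nodes of this
tree are nested, the two children of a node are disjoint, and lengths at least halve from a node
to its children, so they generate a generalized Cantor set. A point of it lies in the intervals
along one branch, and the play along that branch is consistent with `σ` and converges to it.
-/

/-- Addresses are read backwards, unlike in `GenCantor`: the children of `[c r, d r]` are
indexed by `false :: r` (left) and `true :: r` (right). -/
structure IsCantorScheme (c d : List Bool → ℝ) : Prop where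
  lt : ∀ r, c r < d r
  left_le : ∀ i r, c r ≤ c (i :: r)
  right_le : ∀ i r, d (i :: r) ≤ d r
  sep : ∀ r, d (false :: r) < c (true :: r)
  halve : ∀ i r, d (i :: r) - c (i :: r) ≤ (d r - c r) / 2

open scoped Topology

namespace IsCantorScheme

variable {c d : List Bool → ℝ}

lemma Icc_cons_subset (h : IsCantorScheme c d) (i : Bool) (r : List Bool) :
    Icc (c (i :: r)) (d (i :: r)) ⊆ Icc (c r) (d r) :=
  Icc_subset_Icc (h.left_le i r) (h.right_le i r)

lemma diam_le (h : IsCantorScheme c d) (r : List Bool) :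
    d r - c r ≤ (d [] - c []) / 2 ^ r.length := by
  induction r with
  | nil => simp
  | cons i r ih =>
    calc d (i :: r) - c (i :: r) ≤ (d r - c r) / 2 := h.halve i r
      _ ≤ (d [] - c []) / 2 ^ r.length / 2 := by gcongr
      _ = (d [] - c []) / 2 ^ (i :: r).length := by rw [List.length_cons, pow_succ, div_div]

lemma eq_of_mem_Icc (h : IsCantorScheme c d) {r r' : List Bool} (hlen : r.length = r'.length)
    {x : ℝ} (hx : x ∈ Icc (c r) (d r)) (hx' : x ∈ Icc (c r') (d r')) : r = r' := by
  induction r generalizing r' with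
  | nil => exact (List.length_eq_zero_iff.mp hlen.symm).symm
  | cons i s ih =>
    obtain _ | ⟨i', s'⟩ := r'
    · simp at hlen
    obtain rfl : s = s' :=
      ih (by simpa using hlen) (h.Icc_cons_subset i s hx) (h.Icc_cons_subset i' s' hx')
    have hsep := h.sep s
    cases i <;> cases i'
    all_goals first | rfl | exfalso; linarith [hx.1, hx.2, hx'.1, hx'.2]

noncomputable def toGenCantor (h : IsCantorScheme c d) : GenCantor where
  lo := c []
  hi := d []
  lo_lt_hi := h.lt []
  e n := 2 * (d [] - c []) * (1 / 2) ^ n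
  e_pos n := by have := h.lt []; positivity
  e_anti := (pow_right_strictAnti₀ (by norm_num) (by norm_num)).const_mul
    (by have := h.lt []; linarith)
  e_lim := by
    simpa using (tendsto_pow_atTop_nhds_zero_of_lt_one (by norm_num : (0 : ℝ) ≤ 1 / 2)
      (by norm_num)).const_mul (2 * (d [] - c []))
  c l := c l.reverse
  d l := d l.reverse
  diam_pos l _ := sub_pos.mpr (h.lt _)
  diam_lt l _ := by
    have hpos := h.lt []
    calc d l.reverse - c l.reverse ≤ (d [] - c []) / 2 ^ l.length := by
          simpa using h.diam_le l.reverse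
      _ < 2 * (d [] - c []) * (1 / 2) ^ l.length := by
          rw [one_div, inv_pow, ← div_eq_mul_inv]; gcongr; linarith
  root_sub i := h.Icc_cons_subset i []
  nested l _ i := by simpa using h.Icc_cons_subset i l.reverse
  disj l := by
    simp only [List.reverse_append, List.reverse_singleton, List.singleton_append]
    refine eq_empty_iff_forall_notMem.mpr fun x ⟨hfalse, htrue⟩ => ?_
    linarith [hfalse.2, htrue.1, h.sep l.reverse]

lemma exists_chain_of_mem_C (h : IsCantorScheme c d) {x : ℝ} (hx : x ∈ h.toGenCantor.C) :
    ∃ R : ℕ → List Bool, (∀ n, (R n).length = n) ∧ (∀ n, ∃ i, R (n + 1) = i :: R n) ∧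
      ∀ n, x ∈ Icc (c (R n)) (d (R n)) := by
  have level (n : ℕ) : ∃ r : List Bool, r.length = n ∧ x ∈ Icc (c r) (d r) := by
    obtain ⟨l, hl, hxl⟩ := mem_iUnion₂.mp (mem_iInter.mp hx n)
    replace hl : l.reverse.length = n + 1 := (List.length_reverse).trans hl
    obtain ⟨i, r, hir⟩ := List.exists_cons_of_length_eq_add_one hl
    refine ⟨r, by simpa [hir] using hl, h.Icc_cons_subset i r ?_⟩
    rw [← hir]
    exact hxl
  choose R hlen hmem using level
  refine ⟨R, hlen, fun n => ?_, hmem⟩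
  obtain ⟨i, r, hir⟩ := List.exists_cons_of_length_eq_add_one (hlen (n + 1))
  have hr : r.length = n := by simpa [hlen] using (congrArg List.length hir).symm
  have hxr : x ∈ Icc (c r) (d r) := h.Icc_cons_subset i r (hir ▸ hmem (n + 1))
  exact ⟨i, hir.trans (by rw [h.eq_of_mem_Icc (hr.trans (hlen n).symm) hxr (hmem n)])⟩

lemma tendsto_left_of_mem_Icc (h : IsCantorScheme c d) {R : ℕ → List Bool}
    (hlen : ∀ n, (R n).length = n) {x : ℝ} (hx : ∀ n, x ∈ Icc (c (R n)) (d (R n))) :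
    Tendsto (fun n => c (R n)) atTop (𝓝 x) := by
  have hshrink : Tendsto (fun n : ℕ => x - (d [] - c []) * (1 / 2) ^ n) atTop (𝓝 x) := by
    simpa using ((tendsto_pow_atTop_nhds_zero_of_lt_one (by norm_num : (0 : ℝ) ≤ 1 / 2)
      (by norm_num)).const_mul (d [] - c [])).const_sub x
  refine tendsto_of_tendsto_of_tendsto_of_le_of_le hshrink tendsto_const_nhds (fun n => ?_)
    (fun n => (hx n).1)
  have hdiam := h.diam_le (R n)
  rw [hlen, div_eq_mul_one_div, ← one_div_pow] at hdiam
  linarith [(hx n).2]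

end IsCantorScheme

/-- A position after `n` rounds, encoded by a pair of sequences of which only the terms up to
index `n` matter. -/
structure IsHistory (a₀ b₀ : ℝ) (n : ℕ) (p : (ℕ → ℝ) × (ℕ → ℝ)) : Prop where
  fst_zero : p.1 0 = a₀
  snd_zero : p.2 0 = b₀
  step : ∀ k < n, p.1 k < p.1 (k + 1) ∧ p.2 (k + 1) < p.2 k
  fst_lt_snd : p.1 n < p.2 n

lemma IsHistory.validHistA {a₀ b₀ : ℝ} {n : ℕ} {p : (ℕ → ℝ) × (ℕ → ℝ)}
    (h : IsHistory a₀ b₀ n p) :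
    ValidHistA a₀ b₀ (fun i : Fin (n + 1) => p.1 i) (fun i => p.2 i) :=
  ⟨h.fst_zero, h.snd_zero,
    Fin.strictMono_iff_lt_succ.mpr fun i => by simpa using (h.step i i.isLt).1,
    Fin.strictAnti_iff_succ_lt.mpr fun i => by simpa using (h.step i i.isLt).2,
    by simpa using h.fst_lt_snd⟩

namespace StratA

variable {a₀ b₀ : ℝ} (σ : StratA a₀ b₀) {n : ℕ} {p : (ℕ → ℝ) × (ℕ → ℝ)}

noncomputable def nextMove (n : ℕ) (p : (ℕ → ℝ) × (ℕ → ℝ)) : ℝ :=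
  σ.f n (fun i : Fin (n + 1) => p.1 i) (fun i => p.2 i)

lemma nextMove_mem_Ioo (h : IsHistory a₀ b₀ n p) : σ.nextMove n p ∈ Ioo (p.1 n) (p.2 n) := by
  simpa [nextMove] using σ.valid n _ _ h.validHistA

noncomputable def advance (n : ℕ) (p : (ℕ → ℝ) × (ℕ → ℝ)) (t : ℝ) : (ℕ → ℝ) × (ℕ → ℝ) :=
  (Function.update p.1 (n + 1) (σ.nextMove n p), Function.update p.2 (n + 1) t)

lemma advance_apply_of_le {t : ℝ} {k : ℕ} (hk : k ≤ n) :
    (σ.advance n p t).1 k = p.1 k ∧ (σ.advance n p t).2 k = p.2 k := by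
  simp [advance, Function.update_of_ne (show k ≠ n + 1 by omega)]

lemma isHistory_advance (h : IsHistory a₀ b₀ n p) {t : ℝ}
    (ht : t ∈ Ioo (σ.nextMove n p) (p.2 n)) : IsHistory a₀ b₀ (n + 1) (σ.advance n p t) := by
  have hmove := σ.nextMove_mem_Ioo h
  have hold {k : ℕ} (hk : k ≤ n) := σ.advance_apply_of_le (p := p) (t := t) hk
  refine ⟨(hold n.zero_le).1.trans h.fst_zero, (hold n.zero_le).2.trans h.snd_zero,
    fun k hk => ?_, by simpa [advance] using ht.1⟩
  rcases Nat.lt_succ_iff_lt_or_eq.mp hk with hk | rfl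
  · rw [(hold hk.le).1, (hold hk.le).2, (hold hk).1, (hold hk).2]
    exact h.step k hk
  · simpa [advance] using ⟨hmove.1, ht.2⟩

noncomputable def upperCut (n : ℕ) (p : (ℕ → ℝ) × (ℕ → ℝ)) : ℝ :=
  (σ.nextMove n p + p.2 n) / 2

noncomputable def lowerCut (n : ℕ) (p : (ℕ → ℝ) × (ℕ → ℝ)) : ℝ :=
  (σ.nextMove n p + σ.nextMove (n + 1) (σ.advance n p (σ.upperCut n p))) / 2

lemma cuts_ordered (h : IsHistory a₀ b₀ n p) :
    σ.nextMove n p < σ.lowerCut n p ∧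
      σ.lowerCut n p < σ.nextMove (n + 1) (σ.advance n p (σ.upperCut n p)) ∧
      σ.nextMove (n + 1) (σ.advance n p (σ.upperCut n p)) < σ.upperCut n p ∧
      σ.upperCut n p < p.2 n := by
  have hmove := σ.nextMove_mem_Ioo h
  have hupper : σ.upperCut n p ∈ Ioo (σ.nextMove n p) (p.2 n) := by
    constructor <;> simp only [upperCut] <;> linarith [hmove.2]
  have hreply := σ.nextMove_mem_Ioo (σ.isHistory_advance h hupper)
  simp only [advance, Function.update_self] at hreply
  refine ⟨?_, ?_, hreply.2, hupper.2⟩ <;> simp only [lowerCut, advance] <;> linarith [hreply.1]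

lemma isPlay_consistentA_of_advance (P : ℕ → (ℕ → ℝ) × (ℕ → ℝ))
    (hP : ∀ n, IsHistory a₀ b₀ n (P n)) (hadv : ∀ n, ∃ t, P (n + 1) = σ.advance n (P n) t) :
    IsPlay a₀ b₀ (fun k => (P k).1 k) (fun k => (P k).2 k) ∧
      ConsistentA σ (fun k => (P k).1 k) (fun k => (P k).2 k) := by
  have agree (m k : ℕ) (hk : k ≤ m) : (P m).1 k = (P k).1 k ∧ (P m).2 k = (P k).2 k := by
    induction m, hk using Nat.le_induction with
    | base => exact ⟨rfl, rfl⟩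
    | succ m hkm ih =>
      obtain ⟨t, ht⟩ := hadv m
      rw [ht, (σ.advance_apply_of_le hkm).1, (σ.advance_apply_of_le hkm).2]
      exact ih
  refine ⟨⟨(hP 0).fst_zero, (hP 0).snd_zero, fun n => ?_⟩, fun n => ?_⟩
  · obtain ⟨hstep_a, hstep_b⟩ := (hP (n + 1)).step n n.lt_succ_self
    rw [(agree (n + 1) n n.le_succ).1] at hstep_a
    rw [(agree (n + 1) n n.le_succ).2] at hstep_b
    exact ⟨hstep_a, (hP (n + 1)).fst_lt_snd, hstep_b⟩
  · obtain ⟨t, ht⟩ := hadv n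
    have hfst : (P (n + 1)).1 (n + 1) = σ.nextMove n (P n) := by simp [ht, advance]
    simp only [hfst, nextMove]
    congr 1 <;> funext i
    exacts [(agree n i i.is_le).1, (agree n i i.is_le).2]

noncomputable def node : List Bool → (ℕ → ℝ) × (ℕ → ℝ)
  | [] => (fun _ => a₀, fun _ => b₀)
  | true :: r => σ.advance r.length (node r) (σ.upperCut r.length (node r))
  | false :: r => σ.advance r.length (node r) (σ.lowerCut r.length (node r))

noncomputable def leftEnd (r : List Bool) : ℝ := σ.nextMove r.length (σ.node r)

noncomputable def rightEnd (r : List Bool) : ℝ := (σ.node r).2 r.length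

lemma node_cons_eq_advance (i : Bool) (r : List Bool) :
    ∃ t, σ.node (i :: r) = σ.advance r.length (σ.node r) t := by
  cases i <;> exact ⟨_, rfl⟩

lemma node_cons_fst (i : Bool) (r : List Bool) :
    (σ.node (i :: r)).1 (r.length + 1) = σ.leftEnd r := by
  obtain ⟨t, ht⟩ := σ.node_cons_eq_advance i r
  simp [ht, advance, leftEnd]

lemma isHistory_node (hab : a₀ < b₀) (r : List Bool) :
    IsHistory a₀ b₀ r.length (σ.node r) := by
  induction r with
  | nil => exact ⟨rfl, rfl, fun k hk => absurd hk k.not_lt_zero, hab⟩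
  | cons i r ih =>
    obtain ⟨hlow, hlow', hup', hup⟩ := σ.cuts_ordered ih
    cases i
    · exact σ.isHistory_advance ih ⟨hlow, by linarith⟩
    · exact σ.isHistory_advance ih ⟨by linarith, hup⟩

lemma leftEnd_lt_rightEnd (hab : a₀ < b₀) (r : List Bool) : σ.leftEnd r < σ.rightEnd r :=
  (σ.nextMove_mem_Ioo (σ.isHistory_node hab r)).2

lemma leftEnd_lt_leftEnd_cons (hab : a₀ < b₀) (i : Bool) (r : List Bool) :
    σ.leftEnd r < σ.leftEnd (i :: r) := by
  have h := (σ.nextMove_mem_Ioo (σ.isHistory_node hab (i :: r))).1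
  rwa [List.length_cons, node_cons_fst] at h

lemma rightEnd_true_cons (r : List Bool) :
    σ.rightEnd (true :: r) = (σ.leftEnd r + σ.rightEnd r) / 2 := by
  simp [rightEnd, leftEnd, node, advance, upperCut]

lemma rightEnd_false_cons (r : List Bool) :
    σ.rightEnd (false :: r) = (σ.leftEnd r + σ.leftEnd (true :: r)) / 2 := by
  simp [rightEnd, leftEnd, node, advance, lowerCut]

lemma isCantorScheme (hab : a₀ < b₀) : IsCantorScheme σ.leftEnd σ.rightEnd := by
  have hlt := σ.leftEnd_lt_rightEnd hab
  have hleft := σ.leftEnd_lt_leftEnd_cons hab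
  have hsep (r : List Bool) : σ.rightEnd (false :: r) < σ.leftEnd (true :: r) := by
    linarith [hleft true r, σ.rightEnd_false_cons r]
  refine ⟨hlt, fun i r => (hleft i r).le, fun i r => ?_, hsep, fun i r => ?_⟩ <;>
  · cases i <;>
      linarith [hlt r, hlt (true :: r), hleft false r, hleft true r, hsep r,
        σ.rightEnd_true_cons r, σ.rightEnd_false_cons r]

end StratA

theorem stmt4_general (a₀ b₀ : ℝ) (hab : a₀ < b₀) (σ : StratA a₀ b₀) :
    ∃ C : Set ℝ, IsGenCantorSet C ∧ C ⊆ limitSetA σ := by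
  have hscheme := σ.isCantorScheme hab
  refine ⟨hscheme.toGenCantor.C, ⟨_, rfl⟩, fun x hx => ?_⟩
  obtain ⟨R, hlen, hchain, hmem⟩ := hscheme.exists_chain_of_mem_C hx
  have hhist (n : ℕ) : IsHistory a₀ b₀ n (σ.node (R n)) := by
    simpa [hlen] using σ.isHistory_node hab (R n)
  have hadv (n : ℕ) : ∃ t, σ.node (R (n + 1)) = σ.advance n (σ.node (R n)) t := by
    obtain ⟨i, hi⟩ := hchain n
    simpa [hi, hlen] using σ.node_cons_eq_advance i (R n)
  obtain ⟨hplay, hcons⟩ := σ.isPlay_consistentA_of_advance _ hhist hadv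
  refine ⟨_, _, hplay, hcons, (tendsto_add_atTop_iff_nat 1).mp ?_⟩
  convert hscheme.tendsto_left_of_mem_Icc hlen hmem using 2 with n
  obtain ⟨i, hi⟩ := hchain n
  simp only [hi, ← σ.node_cons_fst i (R n), hlen]

/-- In the Cantor game on `[a₀, b₀]` with an uncountable target set,
the limit set of any strategy for player A contains a generalized Cantor set. -/
theorem stmt4 (a₀ b₀ : ℝ) (hab : a₀ < b₀) (S : Set ℝ) (hS : S ⊆ Set.Icc a₀ b₀)
    (hSunc : ¬ S.Countable) (σ : StratA a₀ b₀) :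
    ∃ C : Set ℝ, IsGenCantorSet C ∧ C ⊆ limitSetA σ :=
  stmt4_general a₀ b₀ hab σ
end

section
/- In the Cantor game on [a₀, b₀] with an uncountable target set S ⊆ [a₀, b₀], the following three statements are equivalent: (1) player A has a winning strategy; (2) S contains a generalized Cantor set; (3) S contains a nonempty perfect set. -/
open Filter Set

/-!
A strategy for A unfolds into a binary tree of plays: at each move B answers either with the
midpoint of what is left, or with a point below A's answer to that midpoint. The two
continuations are then disjoint and each at most halves the interval `[a (n+1), b n]`, so the
limits along all branches form a generalized Cantor set inside the limit set of the strategy.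

Conversely, for a generalized Cantor set `C ⊆ S`, A always plays a point of `C` that is
approached from the right by whole intervals of the scheme (e.g. the least point of `C ∩ I_l`).
Whatever B answers, such an interval still fits between the two moves, so every move of A, and
hence the limit, lies in the closed set `C`.

A generalized Cantor set is perfect, and a nonempty perfect set contains one, obtained by
repeatedly replacing an interval around a point of the set by two small disjoint intervals
around two distinct points of the set.
-/

open Topology

lemma prefixSeq_succ (s : ℕ → Bool) (n : ℕ) :
    prefixSeq s (n + 1) = prefixSeq s n ++ [s (n + 1)] := by
  unfold prefixSeq
  rw [List.ofFn_succ', List.concat_eq_append]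
  rfl

namespace GenCantor

variable (G : GenCantor)

abbrev I (l : List Bool) : Set ℝ := Icc (G.c l) (G.d l)

lemma c_lt_d {l : List Bool} (hl : l ≠ []) : G.c l < G.d l := by
  linarith [G.diam_pos l hl]

lemma mem_C_iff {x : ℝ} :
    x ∈ G.C ↔ ∀ n : ℕ, ∃ l : List Bool, l.length = n + 1 ∧ x ∈ G.I l := by
  simp only [GenCantor.C, mem_iInter, mem_iUnion, exists_prop]; rfl

lemma isClosed_C : IsClosed G.C :=
  isClosed_iInter fun n =>
    (List.finite_length_eq Bool (n + 1)).isClosed_biUnion fun _ _ => isClosed_Icc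

lemma I_append_subset {l : List Bool} (hl : l ≠ []) (t : List Bool) :
    G.I (l ++ t) ⊆ G.I l := by
  induction t using List.reverseRecOn with
  | nil => simp
  | append_singleton t i ih =>
    rw [← List.append_assoc]
    exact (G.nested (l ++ t) (by simp [hl]) i).trans ih

lemma I_subset_I_take {l : List Bool} (hl : l ≠ []) (n : ℕ) :
    G.I l ⊆ G.I (l.take (n + 1)) := by
  have := G.I_append_subset (l := l.take (n + 1)) (by simpa using hl) (l.drop (n + 1))
  rwa [List.take_append_drop] at this

lemma eq_of_mem_I_append {l : List Bool} {i j : Bool} {x : ℝ} (hi : x ∈ G.I (l ++ [i]))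
    (hj : x ∈ G.I (l ++ [j])) : i = j := by
  have hdisj : x ∉ G.I (l ++ [false]) ∩ G.I (l ++ [true]) := by rw [G.disj l]; exact id
  cases i <;> cases j
  · rfl
  · exact absurd ⟨hi, hj⟩ hdisj
  · exact absurd ⟨hj, hi⟩ hdisj
  · rfl

lemma exists_not_mem_I_append (l : List Bool) (x : ℝ) : ∃ i, x ∉ G.I (l ++ [i]) := by
  by_contra! h
  exact Bool.false_ne_true (G.eq_of_mem_I_append (h false) (h true))

lemma eq_of_mem_I {l₁ l₂ : List Bool} (hlen : l₁.length = l₂.length) {x : ℝ}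
    (h₁ : x ∈ G.I l₁) (h₂ : x ∈ G.I l₂) : l₁ = l₂ := by
  induction l₁ using List.reverseRecOn generalizing l₂ with
  | nil => exact (List.eq_nil_of_length_eq_zero hlen.symm).symm
  | append_singleton m₁ j₁ ih =>
    obtain ⟨m₂, j₂, rfl⟩ : ∃ m₂ j₂, l₂ = m₂ ++ [j₂] :=
      ⟨l₂.dropLast, l₂.getLast (by rintro rfl; simp at hlen),
        (List.dropLast_append_getLast _).symm⟩
    simp only [List.length_append, List.length_singleton, add_left_inj] at hlen
    obtain rfl : m₁ = m₂ := by
      rcases eq_or_ne m₁ [] with rfl | hm₁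
      · exact (List.eq_nil_of_length_eq_zero hlen.symm).symm
      · have hm₂ : m₂ ≠ [] := by rintro rfl; exact hm₁ (List.eq_nil_of_length_eq_zero hlen)
        exact ih hlen (G.nested m₁ hm₁ j₁ h₁) (G.nested m₂ hm₂ j₂ h₂)
    rw [G.eq_of_mem_I_append h₁ h₂]

lemma exists_mem_I_append {x : ℝ} (hx : x ∈ G.C) {l : List Bool} (hl : l ≠ [])
    (hxl : x ∈ G.I l) : ∃ i, x ∈ G.I (l ++ [i]) := by
  obtain ⟨k, hk, hxk⟩ := G.mem_C_iff.1 hx l.length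
  have hk' : k ≠ [] := by rintro rfl; simp at hk
  refine ⟨k.getLast hk', ?_⟩
  have hsplit := List.dropLast_append_getLast hk'
  have hdrop : k.dropLast = l := by
    refine G.eq_of_mem_I (by simp [hk]) ?_ hxl
    have hne : k.dropLast ≠ [] := by
      rw [← List.length_pos_iff, List.length_dropLast, hk]; simpa [List.length_pos_iff] using hl
    exact G.nested _ hne _ (hsplit ▸ hxk)
  rwa [← hdrop, hsplit]

lemma exists_mem_C_mem_I {l : List Bool} (hl : l ≠ []) : ∃ x ∈ G.C, x ∈ G.I l := by
  let L : ℕ → List Bool := fun k => l ++ List.replicate k false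
  have hLne : ∀ k, L k ≠ [] := by simp [L, hl]
  have hL : ∀ k, L (k + 1) = L k ++ [false] := by simp [L, List.replicate_succ']
  obtain ⟨x, hx⟩ := IsCompact.nonempty_iInter_of_sequence_nonempty_isCompact_isClosed
    (fun k => G.I (L k)) (fun k => hL k ▸ G.nested _ (hLne k) false)
    (fun k => nonempty_Icc.2 (G.c_lt_d (hLne k)).le) isCompact_Icc (fun _ => isClosed_Icc)
  rw [mem_iInter] at hx
  have hxl : x ∈ G.I l := by simpa [L] using hx 0
  refine ⟨x, G.mem_C_iff.2 fun n => ?_, hxl⟩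
  rcases le_or_gt (n + 1) l.length with h | h
  · exact ⟨l.take (n + 1), by simp [h], G.I_subset_I_take hl n hxl⟩
  · exact ⟨L (n + 1 - l.length), by simp [L]; omega, hx _⟩

lemma nonempty_C : G.C.Nonempty := by
  obtain ⟨x, hx, -⟩ := G.exists_mem_C_mem_I (l := [false]) (by simp)
  exact ⟨x, hx⟩

lemma exists_e_lt {ε : ℝ} (hε : 0 < ε) : ∃ n, G.e n < ε :=
  (G.e_lim.eventually (gt_mem_nhds hε)).exists

lemma exists_append_mem_I {x : ℝ} (hx : x ∈ G.C) {l : List Bool} (hl : l ≠ [])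
    (hxl : x ∈ G.I l) (n : ℕ) : ∃ t : List Bool, t.length = n ∧ x ∈ G.I (l ++ t) := by
  induction n with
  | zero => exact ⟨[], rfl, by simpa⟩
  | succ n ih =>
    obtain ⟨t, rfl, ht⟩ := ih
    obtain ⟨i, hi⟩ := G.exists_mem_I_append hx (by simp [hl]) ht
    exact ⟨t ++ [i], by simp, by simpa using hi⟩

lemma exists_append_mem_I_diam_lt {x : ℝ} (hx : x ∈ G.C) {l : List Bool} (hl : l ≠ [])
    (hxl : x ∈ G.I l) {ε : ℝ} (hε : 0 < ε) :
    ∃ t : List Bool, x ∈ G.I (l ++ t) ∧ G.d (l ++ t) - G.c (l ++ t) < ε := by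
  obtain ⟨n, hn⟩ := G.exists_e_lt hε
  obtain ⟨t, rfl, ht⟩ := G.exists_append_mem_I hx hl hxl n
  refine ⟨t, ht, (G.diam_lt _ (by simp [hl])).trans_le ?_⟩
  exact (G.e_anti.antitone (by simp)).trans hn.le

lemma perfectSet_C : PerfectSet G.C := by
  refine ⟨G.isClosed_C, fun x hx => Metric.mem_closure_iff.2 fun ε hε => ?_⟩
  obtain ⟨l, hl1, hxl⟩ := G.mem_C_iff.1 hx 0
  have hl : l ≠ [] := by rintro rfl; simp at hl1
  obtain ⟨t, hxt, hdiam⟩ := G.exists_append_mem_I_diam_lt hx hl hxl hε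
  obtain ⟨i, hi⟩ := G.exists_not_mem_I_append (l ++ t) x
  obtain ⟨y, hyC, hy⟩ := G.exists_mem_C_mem_I (l := l ++ t ++ [i]) (by simp)
  have hyt := G.nested _ (by simp [hl]) i hy
  refine ⟨y, ⟨hyC, fun h => hi (h ▸ hy)⟩, ?_⟩
  rw [Real.dist_eq, abs_lt]
  constructor <;> linarith [hxt.1, hxt.2, hyt.1, hyt.2]

lemma tendsto_of_mem_I {L : ℕ → List Bool} (hL : ∀ n, (L n).length = n + 1) {x : ℕ → ℝ}
    {z : ℝ} (hx : ∀ n, x n ∈ G.I (L n)) (hz : ∀ n, z ∈ G.I (L n)) :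
    Tendsto x atTop (𝓝 z) := by
  refine tendsto_iff_dist_tendsto_zero.2 (squeeze_zero (fun _ => dist_nonneg) (fun n => ?_)
    (G.e_lim.comp (tendsto_add_atTop_nat 1)))
  have hdiam := G.diam_lt (L n) (by simp [← List.length_pos_iff, hL])
  rw [hL] at hdiam
  rw [Real.dist_eq, abs_le]
  constructor <;> simp only [Function.comp_apply] <;>
    linarith [(hx n).1, (hx n).2, (hz n).1, (hz n).2]

lemma exists_forall_mem_I_prefixSeq {z : ℝ} (hz : z ∈ G.C) :
    ∃ s : ℕ → Bool, ∀ n, z ∈ G.I (prefixSeq s n) := by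
  choose L hL hzL using G.mem_C_iff.1 hz
  have hne : ∀ n, L n ≠ [] := fun n h => by simpa [h] using hL n
  refine ⟨fun n => (L n).getLast (hne n), fun n => ?_⟩
  suffices h : prefixSeq (fun n => (L n).getLast (hne n)) n = L n from h ▸ hzL n
  induction n with
  | zero =>
    obtain ⟨i, hi⟩ := List.length_eq_one_iff.1 (hL 0)
    simp [prefixSeq, hi]
  | succ n ih =>
    have hsplit := List.dropLast_append_getLast (hne (n + 1))
    have hdrop : (L (n + 1)).dropLast = L n := by
      refine G.eq_of_mem_I (by simp [hL]) ?_ (hzL n)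
      have hzL' := hzL (n + 1)
      rw [← hsplit] at hzL'
      exact G.nested _ (by simp [← List.length_pos_iff, hL]) _ hzL'
    rw [prefixSeq_succ, ih, ← hdrop, hsplit]

def HasIntervalIn (p q : ℝ) : Prop := ∃ m ≠ [], G.I m ⊆ Ioo p q

/-- The least point of `C ∩ I_l` is approached from the right by whole intervals `I_m`: the
sibling of the deep interval containing it lies just to its right. -/
lemma exists_mem_C_forall_hasIntervalIn {l : List Bool} (hl : l ≠ []) :
    ∃ x ∈ G.C ∩ G.I l, ∀ r, x < r → G.HasIntervalIn x r := by
  obtain ⟨y, hyC, hyl⟩ := G.exists_mem_C_mem_I hl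
  obtain ⟨x, hx, hmin⟩ :=
    (isCompact_Icc.inter_left G.isClosed_C).exists_isLeast ⟨y, hyC, hyl⟩
  refine ⟨x, hx, fun r hr => ?_⟩
  obtain ⟨t, hxt, hdiam⟩ := G.exists_append_mem_I_diam_lt hx.1 hl hx.2 (sub_pos.2 hr)
  obtain ⟨i, hi⟩ := G.exists_not_mem_I_append (l ++ t) x
  have hsub := G.nested (l ++ t) (by simp [hl]) i
  obtain ⟨w, hwC, hw⟩ := G.exists_mem_C_mem_I (l := l ++ t ++ [i]) (by simp)
  have hxw : x < w :=
    lt_of_le_of_ne (hmin ⟨hwC, G.I_append_subset hl t (hsub hw)⟩) (by rintro rfl; exact hi hw)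
  have hxc : x < G.c (l ++ t ++ [i]) := by
    by_contra! h
    exact hi ⟨h, hxw.le.trans hw.2⟩
  refine ⟨l ++ t ++ [i], by simp, fun v hv => ⟨hxc.trans_le hv.1, ?_⟩⟩
  linarith [hxt.1, (hsub hv).2]

lemma HasIntervalIn.exists_mem_C {p q : ℝ} (h : G.HasIntervalIn p q) :
    ∃ x ∈ G.C ∩ Ioo p q, ∀ r, x < r → G.HasIntervalIn x r := by
  obtain ⟨m, hm, hmpq⟩ := h
  obtain ⟨x, ⟨hxC, hxm⟩, hx⟩ := G.exists_mem_C_forall_hasIntervalIn hm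
  exact ⟨x, ⟨hxC, hmpq hxm⟩, hx⟩

lemma hasIntervalIn_of_C_subset {p q : ℝ} (h : G.C ⊆ Icc p q) : G.HasIntervalIn p q := by
  obtain ⟨x, ⟨hxC, -⟩, hx⟩ := G.exists_mem_C_forall_hasIntervalIn (l := [false]) (by simp)
  obtain ⟨m, hm, hmx⟩ := hx (x + 1) (by linarith)
  obtain ⟨y, hyC, hym⟩ := G.exists_mem_C_mem_I hm
  obtain ⟨m', hm', hm'x⟩ := hx y (hmx hym).1
  exact ⟨m', hm', hm'x.trans (Ioo_subset_Ioo (h hxC).1 (h hyC).2)⟩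

open Classical in
noncomputable def move (p q : ℝ) : ℝ :=
  if h : G.HasIntervalIn p q then (HasIntervalIn.exists_mem_C G h).choose else (p + q) / 2

lemma move_spec {p q : ℝ} (h : G.HasIntervalIn p q) :
    G.move p q ∈ G.C ∩ Ioo p q ∧ ∀ r, G.move p q < r → G.HasIntervalIn (G.move p q) r := by
  rw [move, dif_pos h]
  exact (HasIntervalIn.exists_mem_C G h).choose_spec

lemma move_mem_Ioo {p q : ℝ} (hpq : p < q) : G.move p q ∈ Ioo p q := by
  by_cases h : G.HasIntervalIn p q
  · exact (G.move_spec h).1.2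
  · rw [move, dif_neg h]
    constructor <;> linarith

noncomputable def stratA (a₀ b₀ : ℝ) : StratA a₀ b₀ where
  f n a b := G.move (a (Fin.last n)) (b (Fin.last n))
  valid _ _ _ h := G.move_mem_Ioo h.2.2.2.2

lemma limitSetA_stratA_subset {a₀ b₀ : ℝ} (h : G.HasIntervalIn a₀ b₀) :
    limitSetA (G.stratA a₀ b₀) ⊆ G.C := by
  rintro z ⟨a, b, ⟨ha₀, hb₀, hplay⟩, hcons, hlim⟩
  have hmove : ∀ n, a (n + 1) = G.move (a n) (b n) := hcons
  have hinv : ∀ n, G.HasIntervalIn (a n) (b n) := by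
    intro n
    induction n with
    | zero => rwa [ha₀, hb₀]
    | succ n ih =>
      have hlt := (hplay n).2.1
      rw [hmove] at hlt ⊢
      exact (G.move_spec ih).2 _ hlt
  refine G.isClosed_C.mem_of_tendsto ((tendsto_add_atTop_iff_nat 1).2 hlim)
    (Eventually.of_forall fun n => ?_)
  rw [hmove]
  exact (G.move_spec (hinv n)).1.1

end GenCantor

structure HalvingScheme where
  c : List Bool → ℝ
  d : List Bool → ℝ
  c_lt_d : ∀ l, c l < d l
  c_le_c_append : ∀ l i, c l ≤ c (l ++ [i])
  d_append_le_d : ∀ l i, d (l ++ [i]) ≤ d l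
  d_false_lt_c_true : ∀ l, d (l ++ [false]) < c (l ++ [true])
  diam_append_le : ∀ l i, d (l ++ [i]) - c (l ++ [i]) ≤ (d l - c l) / 2

namespace HalvingScheme

variable (T : HalvingScheme)

lemma diam_le (l : List Bool) : T.d l - T.c l ≤ (T.d [] - T.c []) * (1 / 2) ^ l.length := by
  induction l using List.reverseRecOn with
  | nil => simp
  | append_singleton l i ih =>
    rw [List.length_append, List.length_singleton, pow_succ]
    linarith [T.diam_append_le l i]

noncomputable def toGenCantor : GenCantor where
  lo := T.c []
  hi := T.d []
  lo_lt_hi := T.c_lt_d []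
  e n := 2 * (T.d [] - T.c []) * (1 / 2) ^ n
  e_pos n := by have := T.c_lt_d []; positivity
  e_anti m n hmn := by
    have := T.c_lt_d []
    have := pow_lt_pow_right_of_lt_one₀ (by norm_num : (0 : ℝ) < 1 / 2) (by norm_num) hmn
    dsimp only
    nlinarith
  e_lim := by
    simpa using (tendsto_pow_atTop_nhds_zero_of_lt_one (by norm_num : (0 : ℝ) ≤ 1 / 2)
      (by norm_num)).const_mul (2 * (T.d [] - T.c []))
  c := T.c
  d := T.d
  diam_pos l _ := sub_pos.2 (T.c_lt_d l)
  diam_lt l _ := by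
    have := T.c_lt_d []
    have : (0 : ℝ) < (1 / 2) ^ l.length := by positivity
    nlinarith [T.diam_le l]
  root_sub i := Icc_subset_Icc (T.c_le_c_append [] i) (T.d_append_le_d [] i)
  nested l _ i := Icc_subset_Icc (T.c_le_c_append l i) (T.d_append_le_d l i)
  disj l := by
    ext x
    simp only [mem_inter_iff, mem_Icc, mem_empty_iff_false, iff_false]
    have := T.d_false_lt_c_true l
    intro h
    linarith [h.1.2, h.2.1]

end HalvingScheme

lemma PerfectSet.exists_split {P : Set ℝ} (hP : PerfectSet P) {c d : ℝ}
    (h : (P ∩ Ioo c d).Nonempty) :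
    ∃ q : Bool → ℝ × ℝ, (∀ i, (P ∩ Ioo (q i).1 (q i).2).Nonempty ∧ c ≤ (q i).1 ∧ (q i).2 ≤ d ∧
      (q i).2 - (q i).1 ≤ (d - c) / 2) ∧ (q false).2 < (q true).1 := by
  obtain ⟨x, hxP, hx⟩ := h
  obtain ⟨y, hyP, hy, hyx⟩ : ∃ y ∈ P, y ∈ Ioo c d ∧ y ≠ x := by
    obtain ⟨y, hy, hyP, hyx⟩ := mem_closure_iff_nhds.1 (hP.2 x hxP) _ (Ioo_mem_nhds hx.1 hx.2)
    exact ⟨y, hyP, hy, hyx⟩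
  wlog hxy : x < y generalizing x y
  · exact this y hyP hy x hxP hx hyx.symm (lt_of_le_of_ne (not_lt.1 hxy) hyx)
  obtain ⟨r, hr, hrx, hry, hrxy⟩ : ∃ r : ℝ, 0 < r ∧ r < x - c ∧ r < d - y ∧ r < y - x := by
    obtain ⟨r, hr, hr'⟩ := exists_between (lt_min (lt_min (sub_pos.2 hx.1) (sub_pos.2 hy.2))
      (sub_pos.2 hxy))
    simp only [lt_min_iff] at hr'
    exact ⟨r, hr, hr'.1.1, hr'.1.2, hr'.2⟩
  refine ⟨fun i => if i then (y - r / 4, y + r / 4) else (x - r / 4, x + r / 4), ?_, ?_⟩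
  · rintro (_ | _)
    · refine ⟨⟨x, hxP, ?_, ?_⟩, ?_, ?_, ?_⟩ <;> dsimp <;> linarith
    · refine ⟨⟨y, hyP, ?_, ?_⟩, ?_, ?_, ?_⟩ <;> dsimp <;> linarith
  · dsimp; linarith

lemma PerfectSet.exists_genCantor_subset {P : Set ℝ} (hP : PerfectSet P) (hne : P.Nonempty) :
    ∃ G : GenCantor, G.C ⊆ P := by
  obtain ⟨x₀, hx₀⟩ := hne
  have hsplit : ∀ p : ℝ × ℝ, ∃ q : Bool → ℝ × ℝ, (P ∩ Ioo p.1 p.2).Nonempty →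
      (∀ i, (P ∩ Ioo (q i).1 (q i).2).Nonempty ∧ p.1 ≤ (q i).1 ∧ (q i).2 ≤ p.2 ∧
        (q i).2 - (q i).1 ≤ (p.2 - p.1) / 2) ∧ (q false).2 < (q true).1 := by
    intro p
    by_cases h : (P ∩ Ioo p.1 p.2).Nonempty
    · obtain ⟨q, hq⟩ := hP.exists_split h
      exact ⟨q, fun _ => hq⟩
    · exact ⟨fun _ => p, fun h' => absurd h' h⟩
  choose q hq using hsplit
  let node : List Bool → ℝ × ℝ := fun l => l.foldl q (x₀ - 1, x₀ + 1)
  have node_append : ∀ l i, node (l ++ [i]) = q (node l) i := by simp [node]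
  have hgood : ∀ l, (P ∩ Ioo (node l).1 (node l).2).Nonempty := by
    intro l
    induction l using List.reverseRecOn with
    | nil => exact ⟨x₀, hx₀, by simp [node]⟩
    | append_singleton l i ih => rw [node_append]; exact ((hq _ ih).1 i).1
  let T : HalvingScheme :=
    { c := fun l => (node l).1
      d := fun l => (node l).2
      c_lt_d := fun l => by obtain ⟨_, _, h⟩ := hgood l; exact h.1.trans h.2
      c_le_c_append := fun l i => by simp only [node_append]; exact ((hq _ (hgood l)).1 i).2.1
      d_append_le_d := fun l i => by simp only [node_append]; exact ((hq _ (hgood l)).1 i).2.2.1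
      d_false_lt_c_true := fun l => by simp only [node_append]; exact (hq _ (hgood l)).2
      diam_append_le := fun l i => by
        simp only [node_append]; exact ((hq _ (hgood l)).1 i).2.2.2 }
  refine ⟨T.toGenCantor, fun z hz => ?_⟩
  choose L hL hzL using T.toGenCantor.mem_C_iff.1 hz
  choose x hxP hx using fun n => hgood (L n)
  have hlim := T.toGenCantor.tendsto_of_mem_I hL (fun n => Ioo_subset_Icc_self (hx n)) hzL
  exact hP.1.mem_of_tendsto hlim (Eventually.of_forall hxP)

lemma ValidHistA.snoc {a₀ b₀ : ℝ} {n : ℕ} {a b : Fin (n + 1) → ℝ} (h : ValidHistA a₀ b₀ a b)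
    {x y : ℝ} (hx : a (Fin.last n) < x) (hxy : x < y) (hy : y < b (Fin.last n)) :
    ValidHistA a₀ b₀ (Fin.snoc a x : Fin (n + 2) → ℝ) (Fin.snoc b y) := by
  obtain ⟨ha₀, hb₀, ha, hb, -⟩ := h
  refine ⟨?_, ?_, ?_, ?_, by simpa⟩
  · exact (Fin.snoc_castSucc (α := fun _ => ℝ) x a 0).trans ha₀
  · exact (Fin.snoc_castSucc (α := fun _ => ℝ) y b 0).trans hb₀
  · rw [Fin.strictMono_iff_lt_succ] at ha ⊢
    intro i
    obtain ⟨i, rfl⟩ | rfl := i.eq_castSucc_or_eq_last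
    · simpa only [Fin.snoc_castSucc, Fin.succ_castSucc] using ha i
    · simpa using hx
  · rw [Fin.strictAnti_iff_succ_lt] at hb ⊢
    intro i
    obtain ⟨i, rfl⟩ | rfl := i.eq_castSucc_or_eq_last
    · simpa only [Fin.snoc_castSucc, Fin.succ_castSucc] using hb i
    · simpa using hy

lemma Fin.snoc_restrict {α : Type*} (g : ℕ → α) (n : ℕ) :
    (fun i : Fin (n + 2) => g i) = Fin.snoc (fun i : Fin (n + 1) => g i) (g (n + 1)) := by
  funext i
  obtain ⟨i, rfl⟩ | rfl := i.eq_castSucc_or_eq_last <;> simp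

namespace StratA

variable {a₀ b₀ : ℝ} (σ : StratA a₀ b₀)

/-- B's reply to A's move `x = σ.f n a b`: for `true` the midpoint of `(x, b n)`, for `false`
a point below A's answer to the `true` reply, so that the two continuations stay apart. -/
noncomputable def reply (n : ℕ) (a b : Fin (n + 1) → ℝ) (i : Bool) : ℝ :=
  if i then (σ.f n a b + b (Fin.last n)) / 2
  else (σ.f n a b + σ.f (n + 1) (Fin.snoc a (σ.f n a b))
    (Fin.snoc b ((σ.f n a b + b (Fin.last n)) / 2))) / 2

lemma reply_spec {n : ℕ} {a b : Fin (n + 1) → ℝ} (h : ValidHistA a₀ b₀ a b) :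
    (∀ i, σ.f n a b < σ.reply n a b i ∧ σ.reply n a b i ≤ (σ.f n a b + b (Fin.last n)) / 2) ∧
      σ.reply n a b false <
        σ.f (n + 1) (Fin.snoc a (σ.f n a b)) (Fin.snoc b (σ.reply n a b true)) := by
  have hx := σ.valid n a b h
  have hy := σ.valid (n + 1) _ _ (h.snoc (y := (σ.f n a b + b (Fin.last n)) / 2) hx.1
    (by linarith) (by linarith))
  simp only [Fin.snoc_last] at hy
  refine ⟨fun i => ?_, ?_⟩
  · cases i <;> simp only [reply, if_true, Bool.false_eq_true, if_false] <;>
      constructor <;> linarith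
  · simp only [reply, if_true, Bool.false_eq_true, if_false]
    linarith

noncomputable def play (s : ℕ → Bool) : ℕ → ℝ × ℝ
  | 0 => (a₀, b₀)
  | n + 1 =>
    (σ.f n (fun i : Fin (n + 1) => (play s i).1) (fun i => (play s i).2),
      σ.reply n (fun i : Fin (n + 1) => (play s i).1) (fun i => (play s i).2) (s n))

lemma play_succ (s : ℕ → Bool) (n : ℕ) : σ.play s (n + 1) =
    (σ.f n (fun i : Fin (n + 1) => (σ.play s i).1) (fun i => (σ.play s i).2),
      σ.reply n (fun i : Fin (n + 1) => (σ.play s i).1) (fun i => (σ.play s i).2) (s n)) := by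
  rw [play]

lemma play_zero (s : ℕ → Bool) : σ.play s 0 = (a₀, b₀) := by
  rw [play]

lemma validHistA_play (hab : a₀ < b₀) (s : ℕ → Bool) (n : ℕ) :
    ValidHistA a₀ b₀ (fun i : Fin (n + 1) => (σ.play s i).1) (fun i => (σ.play s i).2) := by
  induction n with
  | zero =>
    simp only [Fin.val_eq_zero, play_zero]
    exact ⟨rfl, rfl, Subsingleton.strictMono (α := Fin 1) _,
      Subsingleton.strictAnti (α := Fin 1) _, hab⟩
  | succ n ih =>
    have hx := σ.valid n _ _ ih
    have hy := ((σ.reply_spec ih).1 (s n))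
    simp only [Fin.val_last] at hx hy
    rw [Fin.snoc_restrict (fun m => (σ.play s m).1), Fin.snoc_restrict (fun m => (σ.play s m).2),
      play_succ]
    exact ih.snoc hx.1 hy.1 (by dsimp only [Fin.val_last]; linarith)

lemma play_step (hab : a₀ < b₀) (s : ℕ → Bool) (n : ℕ) :
    (σ.play s n).1 < (σ.play s (n + 1)).1 ∧ (σ.play s (n + 1)).1 < (σ.play s (n + 1)).2 ∧
      (σ.play s (n + 1)).2 ≤ ((σ.play s (n + 1)).1 + (σ.play s n).2) / 2 := by
  have hx := σ.valid n _ _ (σ.validHistA_play hab s n)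
  have hy := (σ.reply_spec (σ.validHistA_play hab s n)).1 (s n)
  simp only [Fin.val_last] at hx hy
  rw [play_succ]
  exact ⟨hx.1, hy.1, hy.2⟩

lemma isPlay_play (hab : a₀ < b₀) (s : ℕ → Bool) :
    IsPlay a₀ b₀ (fun n => (σ.play s n).1) (fun n => (σ.play s n).2) := by
  refine ⟨by simp only [play_zero], by simp only [play_zero], fun n => ?_⟩
  obtain ⟨h₁, h₂, h₃⟩ := σ.play_step hab s n
  have := (σ.valid n _ _ (σ.validHistA_play hab s n)).2
  simp only [Fin.val_last] at this
  exact ⟨h₁, h₂, by linarith⟩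

lemma consistentA_play (s : ℕ → Bool) :
    ConsistentA σ (fun n => (σ.play s n).1) (fun n => (σ.play s n).2) := fun n => by
  simp only [play_succ]

lemma play_congr {s s' : ℕ → Bool} {n : ℕ} (h : ∀ i < n, s i = s' i) :
    ∀ m ≤ n, σ.play s m = σ.play s' m := by
  intro m
  induction m using Nat.strong_induction_on with
  | _ m ih =>
    intro hm
    cases m with
    | zero => rw [play_zero, play_zero]
    | succ m =>
      have hhist : ∀ i : Fin (m + 1), σ.play s i = σ.play s' i :=
        fun i => ih i i.isLt (by omega)
      rw [play_succ, play_succ, h m (by omega)]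
      simp only [hhist]

lemma play_succ_fst_congr {s s' : ℕ → Bool} {n : ℕ} (h : ∀ i < n, s i = s' i) :
    (σ.play s (n + 1)).1 = (σ.play s' (n + 1)).1 := by
  have hhist : ∀ i : Fin (n + 1), σ.play s i = σ.play s' i :=
    fun i => σ.play_congr h i (by omega)
  simp only [play_succ, hhist]

lemma play_false_lt_play_true (hab : a₀ < b₀) {s₀ s₁ : ℕ → Bool} {n : ℕ}
    (h : ∀ i < n, s₀ i = s₁ i) (h₀ : s₀ n = false) (h₁ : s₁ n = true) :
    (σ.play s₀ (n + 1)).2 < (σ.play s₁ (n + 2)).1 := by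
  have hhist : ∀ i : Fin (n + 1), σ.play s₁ i = σ.play s₀ i :=
    fun i => (σ.play_congr h i (by omega)).symm
  have := (σ.reply_spec (σ.validHistA_play hab s₀ n)).2
  rw [σ.play_succ s₁ (n + 1), Fin.snoc_restrict (fun m => (σ.play s₁ m).1),
    Fin.snoc_restrict (fun m => (σ.play s₁ m).2), σ.play_succ s₁ n]
  simp only [hhist, h₁]
  rwa [play_succ, h₀]

/-- Node `l` of length `n` carries the interval `[a (n + 1), b n]` of the play along `l`
(padded with `false`). -/
noncomputable def halvingScheme (hab : a₀ < b₀) : HalvingScheme where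
  c l := (σ.play (l.getD · false) (l.length + 1)).1
  d l := (σ.play (l.getD · false) l.length).2
  c_lt_d l := by
    obtain ⟨-, h₁, h₂⟩ := (σ.isPlay_play hab (l.getD · false)).2.2 l.length
    exact h₁.trans h₂
  c_le_c_append l i := by
    have hs : ∀ j < l.length, l.getD j false = (l ++ [i]).getD j false :=
      fun j hj => (List.getD_append _ _ _ _ hj).symm
    simp only [List.length_append, List.length_singleton]
    rw [σ.play_succ_fst_congr hs]
    exact (σ.play_step hab _ _).1.le
  d_append_le_d l i := by
    have hs : ∀ j < l.length, (l ++ [i]).getD j false = l.getD j false :=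
      fun j hj => List.getD_append _ _ _ _ hj
    simp only [List.length_append, List.length_singleton]
    rw [← σ.play_congr hs l.length le_rfl]
    exact ((σ.isPlay_play hab _).2.2 l.length).2.2.le
  d_false_lt_c_true l := by
    simp only [List.length_append, List.length_singleton]
    refine σ.play_false_lt_play_true hab (fun j hj => ?_) ?_ ?_
    · rw [List.getD_append _ _ _ _ hj, List.getD_append _ _ _ _ hj]
    · simp
    · simp
  diam_append_le l i := by
    have hs : ∀ j < l.length, (l ++ [i]).getD j false = l.getD j false :=
      fun j hj => List.getD_append _ _ _ _ hj
    simp only [List.length_append, List.length_singleton]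
    rw [← σ.play_congr hs l.length le_rfl, ← σ.play_succ_fst_congr hs]
    obtain ⟨-, -, h⟩ := σ.play_step hab ((l ++ [i]).getD · false) l.length
    have := (σ.play_step hab ((l ++ [i]).getD · false) (l.length + 1)).1
    linarith

lemma exists_genCantor_subset_limitSetA (hab : a₀ < b₀) :
    ∃ G : GenCantor, G.C ⊆ limitSetA σ := by
  refine ⟨(σ.halvingScheme hab).toGenCantor, fun z hz => ?_⟩
  obtain ⟨s, hs⟩ := GenCantor.exists_forall_mem_I_prefixSeq _ hz
  refine ⟨_, _, σ.isPlay_play hab s, σ.consistentA_play s, ?_⟩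
  have hlen : ∀ n, (prefixSeq s n).length = n + 1 := fun n => List.length_ofFn
  have hc : ∀ n,
      (σ.play s (n + 2)).1 = (σ.halvingScheme hab).toGenCantor.c (prefixSeq s n) := by
    intro n
    show _ = (σ.play ((prefixSeq s n).getD · false) ((prefixSeq s n).length + 1)).1
    rw [hlen]
    refine σ.play_succ_fst_congr fun j hj => ?_
    rw [List.getD_eq_getElem _ _ (by rw [hlen]; exact hj)]
    simp only [prefixSeq, List.getElem_ofFn]
  refine (tendsto_add_atTop_iff_nat 2).1 (GenCantor.tendsto_of_mem_I _ hlen (fun n => ?_) hs)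
  rw [hc]
  exact ⟨le_rfl, (GenCantor.c_lt_d _ (by simp [← List.length_pos_iff, hlen])).le⟩

end StratA

theorem stmt5_general (a₀ b₀ : ℝ) (hab : a₀ < b₀) (S : Set ℝ) (hS : S ⊆ Set.Icc a₀ b₀) :
    List.TFAE [
      ∃ σ : StratA a₀ b₀, WinningA σ S,
      ∃ C : Set ℝ, IsGenCantorSet C ∧ C ⊆ S,
      ∃ P : Set ℝ, P.Nonempty ∧ PerfectSet P ∧ P ⊆ S] := by
  tfae_have 1 → 2 := by
    rintro ⟨σ, hσ⟩
    obtain ⟨G, hG⟩ := σ.exists_genCantor_subset_limitSetA hab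
    exact ⟨G.C, ⟨G, rfl⟩, hG.trans hσ⟩
  tfae_have 2 → 3 := by
    rintro ⟨_, ⟨G, rfl⟩, hGS⟩
    exact ⟨G.C, G.nonempty_C, G.perfectSet_C, hGS⟩
  tfae_have 3 → 2 := by
    rintro ⟨P, hne, hP, hPS⟩
    obtain ⟨G, hG⟩ := hP.exists_genCantor_subset hne
    exact ⟨G.C, ⟨G, rfl⟩, hG.trans hPS⟩
  tfae_have 2 → 1 := by
    rintro ⟨_, ⟨G, rfl⟩, hGS⟩
    have hroot := G.hasIntervalIn_of_C_subset (hGS.trans hS)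
    exact ⟨G.stratA a₀ b₀, (G.limitSetA_stratA_subset hroot).trans hGS⟩
  tfae_finish

/-- player A has a winning strategy iff `S` contains a generalized
Cantor set iff `S` contains a nonempty perfect set. -/
theorem stmt5 (a₀ b₀ : ℝ) (hab : a₀ < b₀) (S : Set ℝ) (hS : S ⊆ Set.Icc a₀ b₀)
    (hSunc : ¬ S.Countable) :
    List.TFAE [
      ∃ σ : StratA a₀ b₀, WinningA σ S,
      ∃ C : Set ℝ, IsGenCantorSet C ∧ C ⊆ S,
      ∃ P : Set ℝ, P.Nonempty ∧ PerfectSet P ∧ P ⊆ S] :=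
  stmt5_general a₀ b₀ hab S hS
end

section
/- In the Cantor game on [a₀, b₀] with an uncountable target set S ⊆ [a₀, b₀], the limit set of any strategy for player B contains a generalized Cantor set. -/
open Filter Set

/-!
From any legal position `(aₙ, bₙ)`, player A can make B split it: A first plays close to `bₙ`,
then, in a second try, between B's answer to the first move and `bₙ`. B's two answers give
two disjoint positions inside `(aₙ, bₙ)`, both shorter than `2^-(n+1)`. Doing this along every
branch of the binary tree yields a generalized Cantor set whose intervals are positions of plays
consistent with `σ`. A point of the Cantor set lies in the intervals along one branch (compactness
of `ℕ → Bool`), and so it is the limit of the corresponding play.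
-/

open Function Topology

theorem DependsOn.continuous {ι : Type*} {α : ι → Type*} [∀ i, TopologicalSpace (α i)]
    [∀ i, DiscreteTopology (α i)] {X : Type*} [TopologicalSpace X] {f : (Π i, α i) → X}
    {s : Set ι} (hf : DependsOn f s) (hs : s.Finite) : Continuous f := by
  refine continuous_iff_continuousAt.2 fun x => (continuousAt_const (y := f x)).congr ?_
  have hnear : ∀ᶠ y in 𝓝 x, ∀ i ∈ s, x i = y i := hs.eventually_all.2 fun i _ =>
    ((continuous_apply i).continuousAt.eventually_mem ((isOpen_discrete {x i}).mem_nhds rfl)).mono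
      fun y hy => (mem_singleton_iff.1 hy).symm
  exact hnear.mono fun y hy => hf hy

/-- Positions after `n` rounds are stored as sequences whose values above index `n` are ignored. -/
structure IsPlayUpTo (a₀ b₀ : ℝ) (n : ℕ) (a b : ℕ → ℝ) : Prop where
  a_zero : a 0 = a₀
  b_zero : b 0 = b₀
  lt : a n < b n
  step : ∀ k < n, a k < a (k + 1) ∧ a (k + 1) < b (k + 1) ∧ b (k + 1) < b k

namespace IsPlayUpTo

variable {a₀ b₀ : ℝ} {n : ℕ} {a b : ℕ → ℝ} {x y : ℝ}

lemma update (h : IsPlayUpTo a₀ b₀ n a b) (hx : a n < x) (hxy : x < y) (hy : y < b n) :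
    IsPlayUpTo a₀ b₀ (n + 1) (Function.update a (n + 1) x) (Function.update b (n + 1) y) := by
  refine ⟨by simp [h.a_zero], by simp [h.b_zero], by simpa using hxy, fun k hk => ?_⟩
  rcases Nat.lt_succ_iff_lt_or_eq.1 hk with hk | rfl
  · simpa [update_of_ne (by omega : k + 1 ≠ n + 1), update_of_ne (by omega : k ≠ n + 1)]
      using h.step k hk
  · simpa using ⟨hx, hxy, hy⟩

lemma validHistB (h : IsPlayUpTo a₀ b₀ n a b) (hx : a n < x) (hxb : x < b n) :
    ValidHistB a₀ b₀ (fun i : Fin (n + 2) => Function.update a (n + 1) x i)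
      (fun i : Fin (n + 1) => b i) := by
  have ha : ∀ k < n + 1, Function.update a (n + 1) x k < Function.update a (n + 1) x (k + 1) := by
    intro k hk
    rcases Nat.lt_succ_iff_lt_or_eq.1 hk with hk | rfl
    · simpa [update_of_ne (by omega : k + 1 ≠ n + 1), update_of_ne (by omega : k ≠ n + 1)]
        using (h.step k hk).1
    · simpa using hx
  refine ⟨by simp [h.a_zero], h.b_zero,
    Fin.strictMono_iff_lt_succ.2 fun i => by simpa using ha i i.isLt,
    Fin.strictAnti_iff_succ_lt.2 fun i => by simpa using (h.step i i.isLt).2.2,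
    by simpa using hxb⟩

end IsPlayUpTo

def padBranch (l : List Bool) (k : ℕ) : Bool := l.getD k false

lemma padBranch_append_of_lt {l m : List Bool} {k : ℕ} (hk : k < l.length) :
    padBranch (l ++ m) k = padBranch l k :=
  List.getD_append _ _ _ _ hk

lemma padBranch_append_length (l : List Bool) (i : Bool) : padBranch (l ++ [i]) l.length = i := by
  simp [padBranch]

namespace StratB

variable {a₀ b₀ : ℝ} (σ : StratB a₀ b₀)

/-- B's answer when A plays `x` in the position `(a, b)` after `n` rounds. -/
noncomputable def reply (n : ℕ) (a b : ℕ → ℝ) (x : ℝ) : ℝ :=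
  σ.g n (fun i : Fin (n + 2) => update a (n + 1) x i) (fun i : Fin (n + 1) => b i)

/-- The `min` keeps the first move inside `(a n, b n)` and within `(1/2)^(n+1)` of `b n`. -/
noncomputable def probe (n : ℕ) (a b : ℕ → ℝ) (i : Bool) : ℝ :=
  let x₀ := b n - min (b n - a n) ((1 / 2) ^ (n + 1)) / 2
  cond i ((σ.reply n a b x₀ + b n) / 2) x₀

variable {σ} {n : ℕ} {a b : ℕ → ℝ}

lemma reply_mem {x : ℝ} (h : IsPlayUpTo a₀ b₀ n a b) (hx : a n < x) (hxb : x < b n) :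
    x < σ.reply n a b x ∧ σ.reply n a b x < b n := by
  simpa [reply] using σ.valid n _ _ (h.validHistB hx hxb)

lemma probe_mem (h : IsPlayUpTo a₀ b₀ n a b) (i : Bool) :
    a n < σ.probe n a b i ∧ σ.probe n a b i < b n ∧
      b n - σ.probe n a b i < (1 / 2) ^ (n + 1) := by
  set δ := min (b n - a n) ((1 / 2) ^ (n + 1))
  have hδ : 0 < δ := lt_min (sub_pos.2 h.lt) (by positivity)
  have hδab : δ ≤ b n - a n := min_le_left _ _
  have hδε : δ ≤ (1 / 2) ^ (n + 1) := min_le_right _ _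
  have hy₀ := reply_mem (σ := σ) h (x := b n - δ / 2) (by linarith) (by linarith)
  cases i <;> simp only [probe, cond_false, cond_true] <;> refine ⟨?_, ?_, ?_⟩ <;> linarith

lemma probe_spec (h : IsPlayUpTo a₀ b₀ n a b) (i : Bool) :
    a n < σ.probe n a b i ∧ σ.probe n a b i < σ.reply n a b (σ.probe n a b i) ∧
      σ.reply n a b (σ.probe n a b i) < b n ∧
      σ.reply n a b (σ.probe n a b i) - σ.probe n a b i < (1 / 2) ^ (n + 1) := by
  obtain ⟨ha, hb, hw⟩ := probe_mem h i
  obtain ⟨hx, hy⟩ := reply_mem (σ := σ) h ha hb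
  exact ⟨ha, hx, hy, by linarith⟩

lemma reply_probe_false_lt (h : IsPlayUpTo a₀ b₀ n a b) :
    σ.reply n a b (σ.probe n a b false) < σ.probe n a b true := by
  have hy₀ := (probe_spec (σ := σ) h false).2.2.1
  simp only [probe, cond_false, cond_true] at hy₀ ⊢
  linarith

variable (σ)

noncomputable def advance (n : ℕ) (p : (ℕ → ℝ) × (ℕ → ℝ)) (i : Bool) :
    (ℕ → ℝ) × (ℕ → ℝ) :=
  let x := σ.probe n p.1 p.2 i
  (update p.1 (n + 1) x, update p.2 (n + 1) (σ.reply n p.1 p.2 x))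

/-- The positions of the play of `σ` in which A, in round `n + 1`, plays probe `s n`. -/
noncomputable def branchPos (s : ℕ → Bool) : ℕ → (ℕ → ℝ) × (ℕ → ℝ)
  | 0 => (fun _ => a₀, fun _ => b₀)
  | n + 1 => σ.advance n (branchPos s n) (s n)

noncomputable def branchA (s : ℕ → Bool) (n : ℕ) : ℝ := (σ.branchPos s n).1 n

noncomputable def branchB (s : ℕ → Bool) (n : ℕ) : ℝ := (σ.branchPos s n).2 n

variable {σ} {s t : ℕ → Bool}

lemma branchPos_apply_of_le {k : ℕ} (hk : k ≤ n) :
    (σ.branchPos s n).1 k = σ.branchA s k ∧ (σ.branchPos s n).2 k = σ.branchB s k := by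
  induction n with
  | zero => obtain rfl := Nat.le_zero.1 hk; exact ⟨rfl, rfl⟩
  | succ n ih =>
    rcases Nat.of_le_succ hk with hk | rfl
    · simpa [branchPos, advance, update_of_ne (by omega : k ≠ n + 1)] using ih hk
    · exact ⟨rfl, rfl⟩

lemma branchPos_congr (h : ∀ k < n, s k = t k) : σ.branchPos s n = σ.branchPos t n := by
  induction n with
  | zero => rfl
  | succ n ih =>
    rw [branchPos, branchPos, h n n.lt_succ_self, ih fun k hk => h k (by omega)]

lemma branchA_congr (h : ∀ k < n, s k = t k) : σ.branchA s n = σ.branchA t n := by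
  rw [branchA, branchA, branchPos_congr h]

lemma branchB_congr (h : ∀ k < n, s k = t k) : σ.branchB s n = σ.branchB t n := by
  rw [branchB, branchB, branchPos_congr h]

lemma branchA_succ :
    σ.branchA s (n + 1) = σ.probe n (σ.branchPos s n).1 (σ.branchPos s n).2 (s n) := by
  simp [branchA, branchPos, advance]

lemma branchPos_succ_fst :
    (σ.branchPos s (n + 1)).1 = update (σ.branchPos s n).1 (n + 1) (σ.branchA s (n + 1)) := by
  simp [branchA, branchPos, advance]

lemma branchB_succ : σ.branchB s (n + 1) =
    σ.reply n (σ.branchPos s n).1 (σ.branchPos s n).2 (σ.branchA s (n + 1)) := by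
  simp [branchA, branchB, branchPos, advance]

lemma isPlayUpTo_branchPos (hab : a₀ < b₀) (s : ℕ → Bool) :
    ∀ n, IsPlayUpTo a₀ b₀ n (σ.branchPos s n).1 (σ.branchPos s n).2
  | 0 => ⟨rfl, rfl, hab, fun _ hk => absurd hk (Nat.not_lt_zero _)⟩
  | n + 1 => by
    have h := isPlayUpTo_branchPos hab s n
    obtain ⟨ha, hxy, hb, -⟩ := probe_spec (σ := σ) h (s n)
    simpa only [branchPos, advance] using h.update ha hxy hb

lemma isPlay_branch (hab : a₀ < b₀) (s : ℕ → Bool) :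
    IsPlay a₀ b₀ (σ.branchA s) (σ.branchB s) := by
  refine ⟨rfl, rfl, fun n => ?_⟩
  have h := (isPlayUpTo_branchPos (σ := σ) hab s (n + 1)).step n n.lt_succ_self
  simpa only [(branchPos_apply_of_le n.le_succ).1, (branchPos_apply_of_le n.le_succ).2,
    (branchPos_apply_of_le le_rfl).1, (branchPos_apply_of_le le_rfl).2] using h

lemma consistentB_branch (s : ℕ → Bool) : ConsistentB σ (σ.branchA s) (σ.branchB s) := by
  intro n
  have ha : ∀ i : Fin (n + 2), update (σ.branchPos s n).1 (n + 1) (σ.branchA s (n + 1)) i =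
      σ.branchA s i := fun i => by
    rw [← branchPos_succ_fst]; exact (branchPos_apply_of_le (Nat.lt_succ_iff.1 i.isLt)).1
  have hb : ∀ i : Fin (n + 1), (σ.branchPos s n).2 i = σ.branchB s i :=
    fun i => (branchPos_apply_of_le (Nat.lt_succ_iff.1 i.isLt)).2
  rw [branchB_succ, reply]
  simp only [ha, hb]

lemma branch_width (hab : a₀ < b₀) (s : ℕ → Bool) (n : ℕ) :
    σ.branchB s (n + 1) - σ.branchA s (n + 1) < (1 / 2) ^ (n + 1) := by
  rw [branchB_succ, branchA_succ]
  exact (probe_spec (isPlayUpTo_branchPos hab s n) (s n)).2.2.2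

lemma branchB_lt_branchA_of_split (hab : a₀ < b₀) (hst : ∀ k < n, s k = t k)
    (hs : s n = false) (ht : t n = true) : σ.branchB s (n + 1) < σ.branchA t (n + 1) := by
  rw [branchB_succ, branchA_succ, branchA_succ, branchPos_congr hst, hs, ht]
  exact reply_probe_false_lt (isPlayUpTo_branchPos hab t n)

lemma continuous_branchA (n : ℕ) : Continuous fun s => σ.branchA s n :=
  DependsOn.continuous (s := Iio n) (fun _ _ h => branchA_congr h) (finite_Iio n)

lemma continuous_branchB (n : ℕ) : Continuous fun s => σ.branchB s n :=
  DependsOn.continuous (s := Iio n) (fun _ _ h => branchB_congr h) (finite_Iio n)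

lemma branchA_lt_branchB (hab : a₀ < b₀) (s : ℕ → Bool) (n : ℕ) :
    σ.branchA s n < σ.branchB s n :=
  (isPlayUpTo_branchPos hab s n).lt

lemma Icc_branch_succ_subset (hab : a₀ < b₀) (s : ℕ → Bool) (n : ℕ) :
    Icc (σ.branchA s (n + 1)) (σ.branchB s (n + 1)) ⊆ Icc (σ.branchA s n) (σ.branchB s n) :=
  have h := (isPlay_branch (σ := σ) hab s).2.2 n
  Icc_subset_Icc h.1.le h.2.2.le

lemma mem_limitSetB_of_forall_mem_Icc (hab : a₀ < b₀) {x : ℝ} (s : ℕ → Bool)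
    (hx : ∀ n, x ∈ Icc (σ.branchA s (n + 1)) (σ.branchB s (n + 1))) : x ∈ limitSetB σ := by
  refine ⟨σ.branchA s, σ.branchB s, isPlay_branch hab s, consistentB_branch s, ?_⟩
  rw [← tendsto_add_atTop_iff_nat 1]
  have hlow : Tendsto (fun n => x - (1 / 2 : ℝ) ^ (n + 1)) atTop (𝓝 x) := by
    simpa using tendsto_const_nhds.sub
      ((tendsto_pow_atTop_nhds_zero_of_lt_one (r := (1 / 2 : ℝ)) (by norm_num) (by norm_num)).comp
        (tendsto_add_atTop_nat 1))
  refine tendsto_of_tendsto_of_tendsto_of_le_of_le hlow tendsto_const_nhds (fun n => ?_)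
    (fun n => (hx n).1)
  linarith [(hx n).2, branch_width (σ := σ) hab s n]

variable (σ) in
noncomputable def cantorData (hab : a₀ < b₀) : GenCantor where
  lo := a₀
  hi := b₀
  lo_lt_hi := hab
  e n := (1 / 2) ^ n
  e_pos n := by positivity
  e_anti _ _ := pow_lt_pow_right_of_lt_one₀ (by norm_num) (by norm_num)
  e_lim := tendsto_pow_atTop_nhds_zero_of_lt_one (by norm_num) (by norm_num)
  c l := σ.branchA (padBranch l) l.length
  d l := σ.branchB (padBranch l) l.length
  diam_pos l _ := sub_pos.2 (branchA_lt_branchB hab _ _)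
  diam_lt l hl := by
    obtain ⟨t, i, rfl⟩ := List.eq_nil_or_concat l |>.resolve_left hl
    simpa using branch_width hab (padBranch (t ++ [i])) t.length
  root_sub i := Icc_branch_succ_subset hab (padBranch [i]) 0
  nested l _ i := by
    simpa [branchA_congr (s := padBranch (l ++ [i])) (t := padBranch l) fun k hk =>
      padBranch_append_of_lt hk, branchB_congr (s := padBranch (l ++ [i])) (t := padBranch l)
      fun k hk => padBranch_append_of_lt hk] using
      Icc_branch_succ_subset hab (padBranch (l ++ [i])) l.length
  disj l := by
    have hlt := branchB_lt_branchA_of_split (σ := σ) hab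
      (fun k hk => (padBranch_append_of_lt hk).trans (padBranch_append_of_lt hk).symm)
      (padBranch_append_length l false) (padBranch_append_length l true)
    refine eq_empty_of_forall_notMem fun x hx => ?_
    simp only [List.length_append, List.length_singleton, mem_inter_iff, mem_Icc] at hx
    linarith [hx.1.2, hx.2.1]

lemma exists_branch_of_mem_C (hab : a₀ < b₀) {x : ℝ} (hx : x ∈ (σ.cantorData hab).C) :
    ∃ s, ∀ n, x ∈ Icc (σ.branchA s (n + 1)) (σ.branchB s (n + 1)) := by
  set K : ℕ → Set (ℕ → Bool) :=
    fun n => {s | x ∈ Icc (σ.branchA s (n + 1)) (σ.branchB s (n + 1))}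
  have hK_nonempty : ∀ n, (K n).Nonempty := fun n => by
    obtain ⟨l, hl : l.length = n + 1, hxl⟩ := mem_iUnion₂.1 (mem_iInter.1 hx n)
    refine ⟨padBranch l, ?_⟩
    show x ∈ Icc (σ.branchA _ (n + 1)) (σ.branchB _ (n + 1))
    rwa [← hl]
  have hK_closed : ∀ n, IsClosed (K n) := fun n =>
    (isClosed_le (continuous_branchA _) continuous_const).inter
      (isClosed_le continuous_const (continuous_branchB _))
  obtain ⟨s, hs⟩ := IsCompact.nonempty_iInter_of_sequence_nonempty_isCompact_isClosed K
    (fun n _ hs => Icc_branch_succ_subset hab _ (n + 1) hs) hK_nonempty (hK_closed 0).isCompact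
    hK_closed
  exact ⟨s, fun n => (mem_iInter.1 hs n : s ∈ K n)⟩

end StratB

theorem stmt6_general (a₀ b₀ : ℝ) (hab : a₀ < b₀) (σ : StratB a₀ b₀) :
    ∃ C : Set ℝ, IsGenCantorSet C ∧ C ⊆ limitSetB σ := by
  refine ⟨_, ⟨σ.cantorData hab, rfl⟩, fun x hx => ?_⟩
  obtain ⟨s, hs⟩ := σ.exists_branch_of_mem_C hab hx
  exact σ.mem_limitSetB_of_forall_mem_Icc hab s hs

/-- In the Cantor game on `[a₀, b₀]` with an uncountable target set,
the limit set of any strategy for player B contains a generalized Cantor set. -/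
theorem stmt6 (a₀ b₀ : ℝ) (hab : a₀ < b₀) (S : Set ℝ) (hS : S ⊆ Set.Icc a₀ b₀)
    (hSunc : ¬ S.Countable) (σ : StratB a₀ b₀) :
    ∃ C : Set ℝ, IsGenCantorSet C ∧ C ⊆ limitSetB σ :=
  stmt6_general a₀ b₀ hab σ
end

section
/- For any reals a < b, there exists a Bernstein set B' in the closed interval [a, b]. -/
open Filter Set

namespace Stmt11Aux
open Cardinal

/-- Family of uncountable closed subsets of `[a, b]`. -/
def Fam (a b : ℝ) : Set (Set ℝ) :=
  {K | K ⊆ Set.Icc a b ∧ IsClosed K ∧ ¬ K.Countable}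

lemma exists_rat_Ioo {K : Set ℝ} (hK : IsClosed K) {x : ℝ} (hx : x ∉ K) :
    ∃ p q : ℚ, (p : ℝ) < x ∧ x < q ∧ Set.Ioo (p : ℝ) q ∩ K = ∅ := by
  have hopen : IsOpen Kᶜ := hK.isOpen_compl
  obtain ⟨ε, hε, hball⟩ := Metric.isOpen_iff.1 hopen x hx
  obtain ⟨p, hp1, hp2⟩ := exists_rat_btwn (show x - ε < x by linarith)
  obtain ⟨q, hq1, hq2⟩ := exists_rat_btwn (show x < x + ε by linarith)
  refine ⟨p, q, hp2, hq1, ?_⟩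
  rw [Set.eq_empty_iff_forall_notMem]
  rintro y ⟨⟨h1, h2⟩, hyK⟩
  apply hball (show y ∈ Metric.ball x ε by
    rw [Real.ball_eq_Ioo]; constructor <;> [linarith; linarith]) hyK

lemma mk_fam_le (a b : ℝ) : #(Fam a b) ≤ 𝔠 := by
  have hinj : Function.Injective (fun K : Fam a b =>
      {pq : ℚ × ℚ | Set.Ioo (pq.1 : ℝ) pq.2 ∩ K.1 = ∅}) := by
    have key : ∀ K L : Fam a b,
        {pq : ℚ × ℚ | Set.Ioo (pq.1 : ℝ) pq.2 ∩ K.1 = ∅} =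
        {pq : ℚ × ℚ | Set.Ioo (pq.1 : ℝ) pq.2 ∩ L.1 = ∅} → K.1 ⊆ L.1 := by
      rintro K L h x hxK
      by_contra hxL
      obtain ⟨p, q, hp, hq, hpq⟩ := exists_rat_Ioo L.2.2.1 hxL
      have h2 : (p, q) ∈ {pq : ℚ × ℚ | Set.Ioo (pq.1 : ℝ) pq.2 ∩ K.1 = ∅} := by
        rw [h]; exact hpq
      have h3 : Set.Ioo (p : ℝ) q ∩ K.1 = ∅ := h2
      exact Set.eq_empty_iff_forall_notMem.1 h3 x ⟨⟨hp, hq⟩, hxK⟩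
    intro K L h
    exact Subtype.ext (le_antisymm (key K L h) (key L K h.symm))
  calc #(Fam a b) ≤ #(Set (ℚ × ℚ)) := mk_le_of_injective hinj
    _ = 2 ^ (ℵ₀ : Cardinal) := by rw [mk_set]; norm_num
    _ = 𝔠 := two_power_aleph0

lemma continuum_le_mk {K : Set ℝ} (hK : IsClosed K) (hunc : ¬ K.Countable) :
    𝔠 ≤ #K := by
  obtain ⟨f, hfK, _, hfinj⟩ := hK.exists_nat_bool_injection_of_not_countable hunc
  have : Function.Injective (fun g : ℕ → Bool => (⟨f g, hfK ⟨g, rfl⟩⟩ : K)) := by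
    intro g1 g2 h
    exact hfinj (congrArg Subtype.val h)
  calc 𝔠 = 2 ^ (ℵ₀ : Cardinal) := two_power_aleph0.symm
    _ = #(ℕ → Bool) := by rw [← mk_bool, ← mk_nat, power_def]
    _ ≤ #K := mk_le_of_injective this

lemma icc_mem_fam {a b : ℝ} (hab : a < b) : Set.Icc a b ∈ Fam a b := by
  refine ⟨le_refl _, isClosed_Icc, fun hc => ?_⟩
  have h1 : #(Set.Icc a b) ≤ ℵ₀ := by
    rw [mk_le_aleph0_iff]
    exact hc.to_subtype
  rw [Cardinal.mk_Icc_real hab] at h1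
  exact absurd h1 (not_le.2 aleph0_lt_continuum)

/-- Index type: the initial ordinal of the continuum. -/
abbrev Idx : Type := (Cardinal.continuum).ord.ToType

noncomputable instance : LinearOrder Idx := inferInstanceAs (LinearOrder _)

lemma mk_idx : #Idx = 𝔠 := by
  rw [Cardinal.mk_toType, Cardinal.card_ord]

/-- An embedding of `Fam a b` into `Idx`. -/
noncomputable def famEmb (a b : ℝ) : Fam a b ↪ Idx :=
  Classical.choice ((Cardinal.le_def _ _).1 (by rw [mk_idx]; exact mk_fam_le a b))

/-- An enumeration of `Fam a b` by `Idx`. -/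
noncomputable def enumF (a b : ℝ) (hab : a < b) : Idx → Set ℝ := fun i =>
  (@Function.invFun _ _ ⟨⟨_, icc_mem_fam hab⟩⟩ (famEmb a b) i).1

lemma enumF_mem (a b : ℝ) (hab : a < b) (i : Idx) : enumF a b hab i ∈ Fam a b :=
  (@Function.invFun _ _ ⟨⟨_, icc_mem_fam hab⟩⟩ (famEmb a b) i).2

lemma enumF_surj (a b : ℝ) (hab : a < b) {K : Set ℝ} (hK : K ∈ Fam a b) :
    ∃ i : Idx, enumF a b hab i = K := by
  refine ⟨famEmb a b ⟨K, hK⟩, ?_⟩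
  unfold enumF
  rw [@Function.leftInverse_invFun _ _ ⟨⟨_, icc_mem_fam hab⟩⟩ _ (famEmb a b).injective ⟨K, hK⟩]

lemma exists_pair (a b : ℝ) (hab : a < b) (i : Idx) (prev : ∀ j : Idx, j < i → ℝ × ℝ) :
    ∃ p : ℝ × ℝ, p.1 ∈ enumF a b hab i ∧ p.2 ∈ enumF a b hab i ∧ p.1 ≠ p.2 ∧
      ∀ (j : Idx) (hj : j < i), p.1 ≠ (prev j hj).1 ∧ p.1 ≠ (prev j hj).2 ∧
        p.2 ≠ (prev j hj).1 ∧ p.2 ≠ (prev j hj).2 := by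
  set K := enumF a b hab i with hKdef
  have hK := enumF_mem a b hab i
  set A : Set ℝ := ⋃ j : Set.Iio i, {(prev j.1 j.2).1, (prev j.1 j.2).2} with hAdef
  have hpairle : ∀ j : Set.Iio i,
      #({(prev j.1 j.2).1, (prev j.1 j.2).2} : Set ℝ) ≤ 2 := by
    intro j
    calc #({(prev j.1 j.2).1, (prev j.1 j.2).2} : Set ℝ)
        ≤ #({(prev j.1 j.2).2} : Set ℝ) + 1 := Cardinal.mk_insert_le
      _ ≤ 2 := by rw [Cardinal.mk_singleton]; norm_num
  have h2lt : (2 : Cardinal) < 𝔠 := by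
    calc (2 : Cardinal) < ℵ₀ := Cardinal.nat_lt_aleph0 2
      _ < 𝔠 := Cardinal.aleph0_lt_continuum
  have hA : #A < 𝔠 := by
    calc #A ≤ Cardinal.sum (fun j : Set.Iio i =>
          #({(prev j.1 j.2).1, (prev j.1 j.2).2} : Set ℝ)) := Cardinal.mk_iUnion_le_sum_mk
      _ ≤ Cardinal.sum (fun _ : Set.Iio i => (2 : Cardinal)) := Cardinal.sum_le_sum _ _ hpairle
      _ = #(Set.Iio i) * 2 := Cardinal.sum_const' _ _
      _ < 𝔠 := Cardinal.mul_lt_of_lt Cardinal.aleph0_le_continuum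
          (Cardinal.mk_Iio_ord_toType i) h2lt
  have hKc : 𝔠 ≤ #K := continuum_le_mk hK.2.1 hK.2.2
  have hnontriv : (K \ A).Nontrivial := by
    rw [← Set.not_subsingleton_iff]
    intro hs
    have h1 : #(K \ A : Set ℝ) ≤ 1 := Cardinal.mk_le_one_iff_set_subsingleton.2 hs
    have h2 : K ⊆ (K \ A) ∪ A := fun x hx =>
      (em (x ∈ A)).elim Or.inr (fun h => Or.inl ⟨hx, h⟩)
    have h3 : #K ≤ #(K \ A : Set ℝ) + #A :=
      (Cardinal.mk_le_mk_of_subset h2).trans (Cardinal.mk_union_le _ _)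
    have h4 : #(K \ A : Set ℝ) + #A < 𝔠 :=
      Cardinal.add_lt_of_lt Cardinal.aleph0_le_continuum
        (lt_of_le_of_lt h1 (lt_trans Cardinal.one_lt_aleph0 Cardinal.aleph0_lt_continuum)) hA
    exact absurd (hKc.trans h3) (not_le.2 h4)
  obtain ⟨x, hx, y, hy, hxy⟩ := hnontriv
  have hmem : ∀ (j : Idx) (hj : j < i), ∀ z ∈ ({(prev j hj).1, (prev j hj).2} : Set ℝ), z ∈ A :=
    fun j hj z hz => Set.mem_iUnion.2 ⟨⟨j, hj⟩, hz⟩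
  refine ⟨(x, y), hx.1, hy.1, hxy, fun j hj => ⟨?_, ?_, ?_, ?_⟩⟩
  · intro h; exact hx.2 (hmem j hj _ (h ▸ Or.inl rfl))
  · intro h; exact hx.2 (hmem j hj _ (h ▸ Or.inr rfl))
  · intro h; exact hy.2 (hmem j hj _ (h ▸ Or.inl rfl))
  · intro h; exact hy.2 (hmem j hj _ (h ▸ Or.inr rfl))

noncomputable def pickPair (a b : ℝ) (hab : a < b) : Idx → ℝ × ℝ :=
  WellFounded.fix (wellFounded_lt) fun i ih =>
    Classical.choose (exists_pair a b hab i (fun j hj => ih j hj))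

lemma pickPair_spec (a b : ℝ) (hab : a < b) (i : Idx) :
    (pickPair a b hab i).1 ∈ enumF a b hab i ∧ (pickPair a b hab i).2 ∈ enumF a b hab i ∧
    (pickPair a b hab i).1 ≠ (pickPair a b hab i).2 ∧
    ∀ (j : Idx) (_ : j < i),
      (pickPair a b hab i).1 ≠ (pickPair a b hab j).1 ∧
      (pickPair a b hab i).1 ≠ (pickPair a b hab j).2 ∧
      (pickPair a b hab i).2 ≠ (pickPair a b hab j).1 ∧
      (pickPair a b hab i).2 ≠ (pickPair a b hab j).2 := by
  have heq : pickPair a b hab i =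
      Classical.choose (exists_pair a b hab i (fun j _ => pickPair a b hab j)) :=
    WellFounded.fix_eq _ _ i
  have hspec := Classical.choose_spec (exists_pair a b hab i (fun j _ => pickPair a b hab j))
  rw [← heq] at hspec
  exact hspec

lemma pickPair_fst_ne_snd (a b : ℝ) (hab : a < b) (i j : Idx) :
    (pickPair a b hab i).1 ≠ (pickPair a b hab j).2 := by
  rcases lt_trichotomy i j with h | h | h
  · exact fun he => ((pickPair_spec a b hab j).2.2.2 i h).2.2.1 he.symm
  · subst h; exact (pickPair_spec a b hab i).2.2.1
  · exact ((pickPair_spec a b hab i).2.2.2 j h).2.1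


lemma isClosed_of_preimage {X T : Set ℝ} (hX : IsClosed X) (hTX : T ⊆ X)
    (h : IsClosed (Subtype.val ⁻¹' T : Set X)) : IsClosed T := by
  rw [← closure_subset_iff_isClosed]
  intro z hz
  have hzX : z ∈ X := hX.closure_subset ((closure_mono hTX) hz)
  have hmem : (⟨z, hzX⟩ : X) ∈ closure (Subtype.val ⁻¹' T : Set X) := by
    rw [closure_subtype]
    have himg : (Subtype.val '' (Subtype.val ⁻¹' T : Set X)) = T := by
      rw [Subtype.image_preimage_coe]
      exact Set.inter_eq_self_of_subset_right hTX
    rw [himg]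
    exact hz
  exact h.closure_subset hmem

end Stmt11Aux

/-- For any reals `a < b` there exists a Bernstein set in `[a, b]`. -/
theorem stmt11 (a b : ℝ) (hab : a < b) :
    ∃ B : Set ℝ, IsBernsteinIn (Set.Icc a b) B := by
  classical
  open Stmt11Aux in
  refine ⟨Set.range (fun i : Idx => (pickPair a b hab i).1), ?_, ?_, ?_⟩
  · rintro _ ⟨i, rfl⟩
    exact (enumF_mem a b hab i).1 ((pickPair_spec a b hab i).1)
  · rintro ⟨T, hTB, hTc, hTcl⟩
    have hTX : T ⊆ Set.Icc a b := hTB.trans (by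
      rintro _ ⟨i, rfl⟩
      exact (enumF_mem a b hab i).1 ((pickPair_spec a b hab i).1))
    have hTclosed : IsClosed T := isClosed_of_preimage isClosed_Icc hTX hTcl
    obtain ⟨i, hi⟩ := enumF_surj a b hab (K := T) ⟨hTX, hTclosed, hTc⟩
    have hmem : (pickPair a b hab i).2 ∈ T := hi ▸ (pickPair_spec a b hab i).2.1
    obtain ⟨j, hj⟩ := hTB hmem
    exact pickPair_fst_ne_snd a b hab j i hj
  · rintro ⟨T, hTB, hTc, hTcl⟩
    have hTX : T ⊆ Set.Icc a b := fun t ht => (hTB ht).1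
    have hTclosed : IsClosed T := isClosed_of_preimage isClosed_Icc hTX hTcl
    obtain ⟨i, hi⟩ := enumF_surj a b hab (K := T) ⟨hTX, hTclosed, hTc⟩
    have hx : (pickPair a b hab i).1 ∈ T := hi ▸ (pickPair_spec a b hab i).1
    exact (hTB hx).2 ⟨i, rfl⟩
end

section
/- Let B' be a Bernstein set in the closed interval [a, b], where a < b. Then B' is not Lebesgue measurable, and B' is uncountable. -/
open Filter Set

open MeasureTheory

theorem MeasureTheory.NullMeasurableSet.exists_isCompact_subset_not_countable
    {α : Type*} [TopologicalSpace α] [MeasurableSpace α] {μ : Measure α} [μ.InnerRegular]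
    [NullSingletonClass μ] {s : Set α} (hs : NullMeasurableSet s μ) (hμs : μ s ≠ 0) :
    ∃ K ⊆ s, IsCompact K ∧ ¬ K.Countable := by
  obtain ⟨t, hts, ht, hts_ae⟩ := hs.exists_measurable_subset_ae_eq
  have hμt : 0 < μ t := by rw [measure_congr hts_ae]; exact pos_iff_ne_zero.mpr hμs
  obtain ⟨K, hKt, hK, hμK⟩ := ht.exists_lt_isCompact hμt
  exact ⟨K, hKt.trans hts, hK, fun hKc => hμK.ne' (hKc.measure_zero μ)⟩

theorem IsBernsteinIn.not_nullMeasurableSet {μ : Measure ℝ} [μ.InnerRegular]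
    [NullSingletonClass μ] {X B : Set ℝ} (hB : IsBernsteinIn X B) (hX : NullMeasurableSet X μ)
    (hμX : μ X ≠ 0) : ¬ NullMeasurableSet B μ := by
  obtain ⟨-, hB_small, hXB_small⟩ := hB
  intro hBm
  by_cases hμB : μ B = 0
  · have hμXB : μ (X \ B) ≠ 0 := by rwa [measure_sdiff_null hμB]
    obtain ⟨K, hKXB, hK, hKc⟩ := (hX.diff hBm).exists_isCompact_subset_not_countable hμXB
    exact hXB_small ⟨K, hKXB, hKc, hK.isClosed.preimage continuous_subtype_val⟩
  · obtain ⟨K, hKB, hK, hKc⟩ := hBm.exists_isCompact_subset_not_countable hμB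
    exact hB_small ⟨K, hKB, hKc, hK.isClosed.preimage continuous_subtype_val⟩

/-- A Bernstein set in `[a, b]` is not Lebesgue measurable and is
uncountable. -/
theorem stmt12 (a b : ℝ) (hab : a < b) (B : Set ℝ)
    (hB : IsBernsteinIn (Set.Icc a b) B) :
    ¬ MeasureTheory.NullMeasurableSet B MeasureTheory.volume ∧ ¬ B.Countable := by
  have hIcc : volume (Set.Icc a b) ≠ 0 := by simp [Real.volume_Icc, hab]
  have hB_nonmeas := hB.not_nullMeasurableSet measurableSet_Icc.nullMeasurableSet hIcc
  exact ⟨hB_nonmeas, fun hBc => hB_nonmeas hBc.measurableSet.nullMeasurableSet⟩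
end
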